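/- arXiv:1907.04752 — 3 statements merged into one kernel-verified Lean document; each statement's English description precedes it below -/
import Mathlib

section
/- For any set of positions P of R and any character α, δ(P,α) equals the union over all v ∈ N⊙(P,α) of δ⊙(v,α) together with the union over all u ∈ N∗(P,α) of δ∗(u,α). -/
/-- Non-empty regular expressions over alphabet `α`, identified with their parse trees. -/
inductive RE (α : Type) : Type where
  | eps : RE α
  | ch : α → RE α
  | cat : RE α → RE α → RE α
  | alt : RE α → RE α → RE α
  | star : RE α → RE α

/-- Child directions in the parse tree (a `star`-node only has an `L` child). -/
inductive Dir : Type where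
  | L : Dir
  | R : Dir
  deriving DecidableEq

/-- A node of the parse tree is identified with the path from the root to it. -/
abbrev TreePath : Type := List Dir

namespace RE

variable {α : Type}

/-- The subexpression of `R` rooted at the node reached by following path `v`
(`none` if no such node exists). -/
def sub : RE α → TreePath → Option (RE α)
  | r, [] => some r
  | .cat r _, .L :: p => sub r p
  | .cat _ s, .R :: p => sub s p
  | .alt r _, .L :: p => sub r p
  | .alt _ s, .R :: p => sub s p
  | .star r, .L :: p => sub r p
  | _, _ => none

/-- `v` is a node of the parse tree of `R`. -/
def IsNode (R : RE α) (v : TreePath) : Prop := ∃ r, R.sub v = some r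

/-- The label of a position (character leaf); `none` if `p` is not a position. -/
def labelOf (R : RE α) (p : TreePath) : Option α :=
  match R.sub p with
  | some (.ch a) => some a
  | _ => none

/-- `p` is a position of `R`, i.e. a leaf labeled by a character. -/
def IsPos (R : RE α) (p : TreePath) : Prop := ∃ a, R.labelOf p = some a

/-- `v` is a `⊙`-node (concatenation node). -/
def IsCatNode (R : RE α) (v : TreePath) : Prop := ∃ r s, R.sub v = some (.cat r s)

/-- `v` is a `∗`-node (Kleene-star node). -/
def IsStarNode (R : RE α) (v : TreePath) : Prop := ∃ r, R.sub v = some (.star r)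

/-- `PosSeq r w` holds when `w` is a sequence of (paths to) positions of `r`
whose labels spell some string of `L(r)`. -/
inductive PosSeq : RE α → List TreePath → Prop where
  | eps : PosSeq .eps []
  | ch (a : α) : PosSeq (.ch a) [[]]
  | cat {r s : RE α} {u v : List TreePath} : PosSeq r u → PosSeq s v →
      PosSeq (.cat r s) (u.map (Dir.L :: ·) ++ v.map (Dir.R :: ·))
  | altL {r s : RE α} {u : List TreePath} : PosSeq r u → PosSeq (.alt r s) (u.map (Dir.L :: ·))
  | altR {r s : RE α} {v : List TreePath} : PosSeq s v → PosSeq (.alt r s) (v.map (Dir.R :: ·))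
  | starNil {r : RE α} : PosSeq (.star r) []
  | starCons {r : RE α} {u w : List TreePath} : PosSeq r u → PosSeq (.star r) w →
      PosSeq (.star r) (u.map (Dir.L :: ·) ++ w)

/-- `first(v)`: the positions (as paths in `R`) that occur first in a position
sequence of the subexpression rooted at `v`. -/
def firstSet (R : RE α) (v : TreePath) : Set TreePath :=
  {p | ∃ r, R.sub v = some r ∧ ∃ p' w, PosSeq r (p' :: w) ∧ p = v ++ p'}

/-- `last(v)`: the positions (as paths in `R`) that occur last in a position
sequence of the subexpression rooted at `v`. -/
def lastSet (R : RE α) (v : TreePath) : Set TreePath :=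
  {p | ∃ r, R.sub v = some r ∧ ∃ w p', PosSeq r (w ++ [p']) ∧ p = v ++ p'}

/-- `follow(R,p)`: the positions that can follow `p` in a position sequence of `R`. -/
def followSet (R : RE α) (p : TreePath) : Set TreePath :=
  {q | ∃ w₁ w₂, PosSeq R (w₁ ++ p :: q :: w₂)}

/-- `firstextent(p) = {v : p ∈ first(v)}`. -/
def firstExtent (R : RE α) (p : TreePath) : Set TreePath := {v | p ∈ R.firstSet v}

/-- `lastextent(p) = {v : p ∈ last(v)}`. -/
def lastExtent (R : RE α) (p : TreePath) : Set TreePath := {v | p ∈ R.lastSet v}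

/-- `firstextent(P)` for a set of positions `P`. -/
def firstExtentSet (R : RE α) (P : Set TreePath) : Set TreePath := ⋃ p ∈ P, R.firstExtent p

/-- `lastextent(P)` for a set of positions `P`. -/
def lastExtentSet (R : RE α) (P : Set TreePath) : Set TreePath := ⋃ p ∈ P, R.lastExtent p

end RE

/-- Lowest common ancestor of two nodes = longest common prefix of the paths. -/
def lcaP : TreePath → TreePath → TreePath
  | a :: p, b :: q => if a = b then a :: lcaP p q else []
  | _, _ => []

namespace RE

variable {α : Type}

/-- `u = parent*(v)`: `u` is the lowest ancestor of `v` (possibly `v` itself)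
that is a `∗`-node. -/
def IsLowestStarAnc (R : RE α) (v u : TreePath) : Prop :=
  u <+: v ∧ R.IsStarNode u ∧ ∀ w, w <+: v → R.IsStarNode w → w <+: u

/-- `δ(p,α)`: the `α`-transitions of the position automaton out of position `p`. -/
def delta (R : RE α) (p : TreePath) (a : α) : Set TreePath :=
  {q | R.labelOf q = some a ∧ q ∈ R.followSet p}

/-- `δ(P,α) = ∪_{p ∈ P} δ(p,α)`. -/
def deltaSet (R : RE α) (P : Set TreePath) (a : α) : Set TreePath := ⋃ p ∈ P, R.delta p a

/-- Internal `⊙`-transition: `δ⊙(v,α) = {q ∈ Pos_α : right(v) ∈ firstextent(q)}`. -/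
def deltaOdot (R : RE α) (v : TreePath) (a : α) : Set TreePath :=
  {q | R.labelOf q = some a ∧ q ∈ R.firstSet (v ++ [Dir.R])}

/-- Internal `∗`-transition: `δ∗(v,α) = {q ∈ Pos_α : parent*(v) ∈ firstextent(q)}`. -/
def deltaStar (R : RE α) (v : TreePath) (a : α) : Set TreePath :=
  {q | R.labelOf q = some a ∧ ∃ u, R.IsLowestStarAnc v u ∧ q ∈ R.firstSet u}

/-- `N⊙(P,α)`: the `⊙`-transition nodes. -/
def NOdot (R : RE α) (P : Set TreePath) (a : α) : Set TreePath :=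
  {v | R.IsCatNode v ∧ (v ++ [Dir.L]) ∈ R.lastExtentSet P ∧
    (∃ q, R.labelOf q = some a ∧ q ∈ R.firstSet (v ++ [Dir.R]))}

/-- `N∗(P,α)`: the `∗`-transition nodes. -/
def NStar (R : RE α) (P : Set TreePath) (a : α) : Set TreePath :=
  {u | R.IsStarNode u ∧
    (∃ p ∈ P, ∃ q, R.labelOf q = some a ∧ R.IsLowestStarAnc (lcaP p q) u) ∧
    (∃ p ∈ P, p ∈ R.lastSet u) ∧ (∃ q, R.labelOf q = some a ∧ q ∈ R.firstSet u)}

/-- `u` `∗`-dominates `v`: `u` is a proper ancestor of `v` and `first(v) ⊆ first(u)`. -/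
def StarDom (R : RE α) (u v : TreePath) : Prop :=
  u <+: v ∧ u ≠ v ∧ R.firstSet v ⊆ R.firstSet u

/-- `u` `⊙`-dominates `v`: `u` is a proper ancestor of `v` and
`first(right(v)) ⊆ first(right(u))`. -/
def OdotDom (R : RE α) (u v : TreePath) : Prop :=
  u <+: v ∧ u ≠ v ∧ R.firstSet (v ++ [Dir.R]) ⊆ R.firstSet (u ++ [Dir.R])

/-- `Ñ⊙(P,α)`: the relevant `⊙`-transition nodes. -/
def RelNOdot (R : RE α) (P : Set TreePath) (a : α) : Set TreePath :=
  {v ∈ R.NOdot P a | ∀ u ∈ R.NOdot P a, ¬ R.OdotDom u v}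

/-- `Ñ∗(P,α)`: the relevant `∗`-transition nodes. -/
def RelNStar (R : RE α) (P : Set TreePath) (a : α) : Set TreePath :=
  {v ∈ R.NStar P a | ∀ u ∈ R.NStar P a, ¬ R.StarDom u v}

/-- `v` is a node of the transition tree `T` of `P`: an ancestor of some position of `P`. -/
def InT (R : RE α) (P : Set TreePath) (v : TreePath) : Prop := ∃ p ∈ P, v <+: p

/-- `v` is a branching node of the transition tree of `P`: both children are in `T`. -/
def Branching (R : RE α) (P : Set TreePath) (v : TreePath) : Prop :=
  R.InT P (v ++ [Dir.L]) ∧ R.InT P (v ++ [Dir.R])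

/-- `v` is a leaf of the transition tree of `P`. -/
def LeafT (R : RE α) (P : Set TreePath) (v : TreePath) : Prop :=
  R.InT P v ∧ ∀ d : Dir, ¬ R.InT P (v ++ [d])

/-- `v` is a `⊙`-live node: a `⊙`-node with `left(v) ∈ lastextent(P)`. -/
def OdotLive (R : RE α) (P : Set TreePath) (v : TreePath) : Prop :=
  R.IsCatNode v ∧ (v ++ [Dir.L]) ∈ R.lastExtentSet P

/-- `v` is weakly `⊙`-dominated by `u`: `u` is `⊙`-live, a proper ancestor of `v`,
and `first(v) ⊆ first(right(u))`. -/
def WeakOdotDom (R : RE α) (P : Set TreePath) (u v : TreePath) : Prop :=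
  R.OdotLive P u ∧ u <+: v ∧ u ≠ v ∧ R.firstSet v ⊆ R.firstSet (u ++ [Dir.R])

/-- The pair `(t, b)` delimits a segment of the transition tree of `P`: a path from a
leaf or branching node `b` up to the nearest branching node `t` strictly above it
(or to the root if there is none). -/
def IsSegment (R : RE α) (P : Set TreePath) (t b : TreePath) : Prop :=
  R.InT P b ∧ t <+: b ∧ t ≠ b ∧
  (R.LeafT P b ∨ R.Branching P b) ∧
  (R.Branching P t ∨ t = []) ∧
  (∀ w, t <+: w → w <+: b → w ≠ t → w ≠ b → ¬ R.Branching P w)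

/-- The language `L(R)`. -/
def lang : RE α → Set (List α)
  | .eps => {[]}
  | .ch a => {[a]}
  | .cat r s => {w | ∃ u ∈ lang r, ∃ v ∈ lang s, w = u ++ v}
  | .alt r s => lang r ∪ lang s
  | .star r => {w | ∃ l : List (List α), (∀ u ∈ l, u ∈ lang r) ∧ w = l.flatten}

/-- The position automaton (Glushkov automaton) of `R`: states are the positions of `R`
plus a start state `none`; for `q ∈ first(R)` there is a transition `(p₀, q, label(q))`,
and for `q ∈ follow(R,p)` a transition `(p, q, label(q))`; accepting states are
`last(R)`, together with `p₀` if `ε ∈ L(R)`. -/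
def posNFA (R : RE α) : NFA α (Option TreePath) where
  step := fun s a =>
    {t | ∃ q : TreePath, t = some q ∧ R.labelOf q = some a ∧
      ((s = none ∧ q ∈ R.firstSet []) ∨ (∃ p, s = some p ∧ q ∈ R.followSet p))}
  start := {none}
  accept := {t | (∃ p, t = some p ∧ p ∈ R.lastSet []) ∨ (t = none ∧ [] ∈ R.lang)}

end RE

/-!
`q` follows `p` exactly when some node glues a position sequence ending in `p` to one
starting with `q`: a `⊙`-node `v` with `p ∈ last(left v)` and `q ∈ first(right v)`, or a
`∗`-node `u` with `p ∈ last(u)` and `q ∈ first(u)`. Such a node gives a sequence of its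
subexpression in which `q` follows `p`, and every sequence of a subexpression extends to one
of `R`. Conversely, induction on the derivation of a sequence locates the node. The delicate
case is an adjacency across two iterations of a star `r*`, with `p` last and `q` first in
`r`: induction on `r` shows that either a node inside `r` already glues them, or no `∗`-node
of `r` lies above `lca(p,q)`, so that the star itself is `parent*(lca(p,q))`.
-/

namespace List

variable {β γ : Type*}

lemma exists_of_map_eq_append_cons_cons {f : β → γ} {l : List β} {x y : List γ} {p q : γ}
    (h : l.map f = x ++ p :: q :: y) :
    ∃ x' p' q' y', l = x' ++ p' :: q' :: y' ∧ f p' = p ∧ f q' = q := by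
  obtain ⟨x', l', rfl, -, h⟩ := map_eq_append_iff.1 h
  obtain ⟨p', l'', rfl, hp, h⟩ := map_eq_cons_iff.1 h
  obtain ⟨q', y', rfl, hq, -⟩ := map_eq_cons_iff.1 h
  exact ⟨x', p', q', y', rfl, hp, hq⟩

lemma exists_of_map_eq_append_singleton {f : β → γ} {l : List β} {x : List γ} {p : γ}
    (h : l.map f = x ++ [p]) : ∃ l' p', l = l' ++ [p'] ∧ f p' = p := by
  obtain ⟨l', l'', rfl, -, h⟩ := map_eq_append_iff.1 h
  obtain ⟨p', rfl, hp⟩ := map_eq_singleton_iff.1 h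
  exact ⟨l', p', rfl, hp⟩

lemma append_eq_append_cons_cons {a b w₁ w₂ : List β} {p q : β}
    (h : a ++ b = w₁ ++ p :: q :: w₂) :
    (∃ x y, a = x ++ p :: q :: y) ∨ (∃ x y, a = x ++ [p] ∧ b = q :: y) ∨
      ∃ x y, b = x ++ p :: q :: y := by
  rcases append_eq_append_iff.1 h with ⟨c, rfl, hb⟩ | ⟨c, rfl, hc⟩
  · exact .inr (.inr ⟨c, w₂, hb⟩)
  · rcases cons_eq_append_iff.1 hc with ⟨rfl, rfl⟩ | ⟨c, rfl, hc'⟩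
    · exact .inr (.inr ⟨[], w₂, rfl⟩)
    rcases cons_eq_append_iff.1 hc' with ⟨rfl, rfl⟩ | ⟨c, rfl, -⟩
    · exact .inr (.inl ⟨w₁, w₂, rfl, rfl⟩)
    · exact .inl ⟨w₁, c, by simp⟩

end List

namespace RE

variable {α : Type}

@[simp] lemma sub_nil (r : RE α) : r.sub [] = some r := by cases r <;> rfl

lemma sub_cat_left (r s : RE α) (x : TreePath) : (cat r s).sub (.L :: x) = r.sub x := rfl
lemma sub_cat_right (r s : RE α) (x : TreePath) : (cat r s).sub (.R :: x) = s.sub x := rfl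
lemma sub_alt_left (r s : RE α) (x : TreePath) : (alt r s).sub (.L :: x) = r.sub x := rfl
lemma sub_alt_right (r s : RE α) (x : TreePath) : (alt r s).sub (.R :: x) = s.sub x := rfl
lemma sub_star_left (r : RE α) (x : TreePath) : (star r).sub (.L :: x) = r.sub x := rfl

lemma sub_append (R : RE α) (v w : TreePath) : R.sub (v ++ w) = (R.sub v).bind (·.sub w) := by
  induction v generalizing R with
  | nil => simp
  | cons d v ih => cases R <;> cases d <;> simp [sub, ih]

lemma exists_posSeq (r : RE α) : ∃ w, PosSeq r w := by
  induction r with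
  | eps => exact ⟨[], .eps⟩
  | ch a => exact ⟨[[]], .ch a⟩
  | cat r s ihr ihs =>
    obtain ⟨u, hu⟩ := ihr
    obtain ⟨v, hv⟩ := ihs
    exact ⟨_, .cat hu hv⟩
  | alt r s ihr _ =>
    obtain ⟨u, hu⟩ := ihr
    exact ⟨_, .altL hu⟩
  | star r _ => exact ⟨[], .starNil⟩

lemma mem_firstSet_nil {r : RE α} {p : TreePath} :
    p ∈ r.firstSet [] ↔ ∃ w, PosSeq r (p :: w) := by
  simp [firstSet]

lemma mem_lastSet_nil {r : RE α} {p : TreePath} :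
    p ∈ r.lastSet [] ↔ ∃ w, PosSeq r (w ++ [p]) := by
  simp [lastSet]

/-- `parent*(v)` does not exist. -/
def NoStarAncestor (r : RE α) (v : TreePath) : Prop := ∀ w, w <+: v → ¬ r.IsStarNode w

def FollowsAtNode (r : RE α) (p q : TreePath) : Prop :=
  (∃ v, r.IsCatNode v ∧ p ∈ r.lastSet (v ++ [Dir.L]) ∧ q ∈ r.firstSet (v ++ [Dir.R])) ∨
  (∃ u, r.IsLowestStarAnc (lcaP p q) u ∧ p ∈ r.lastSet u ∧ q ∈ r.firstSet u)

section Child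

variable {R c : RE α} {d : Dir}

lemma mem_firstSet_cons (hc : ∀ x, R.sub (d :: x) = c.sub x) {p v : TreePath}
    (h : p ∈ c.firstSet v) : d :: p ∈ R.firstSet (d :: v) := by
  obtain ⟨t, ht, p', w, hw, rfl⟩ := h
  exact ⟨t, (hc v).trans ht, p', w, hw, rfl⟩

lemma mem_lastSet_cons (hc : ∀ x, R.sub (d :: x) = c.sub x) {p v : TreePath}
    (h : p ∈ c.lastSet v) : d :: p ∈ R.lastSet (d :: v) := by
  obtain ⟨t, ht, w, p', hw, rfl⟩ := h
  exact ⟨t, (hc v).trans ht, w, p', hw, rfl⟩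

lemma isStarNode_cons_iff (hc : ∀ x, R.sub (d :: x) = c.sub x) {v : TreePath} :
    R.IsStarNode (d :: v) ↔ c.IsStarNode v := by
  simp only [IsStarNode, hc]

lemma IsCatNode.cons (hc : ∀ x, R.sub (d :: x) = c.sub x) {v : TreePath} (h : c.IsCatNode v) :
    R.IsCatNode (d :: v) := by
  simpa only [IsCatNode, hc] using h

lemma IsLowestStarAnc.cons (hc : ∀ x, R.sub (d :: x) = c.sub x) {v u : TreePath}
    (h : c.IsLowestStarAnc v u) : R.IsLowestStarAnc (d :: v) (d :: u) := by
  obtain ⟨huv, hu, hlowest⟩ := h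
  refine ⟨List.cons_prefix_cons.2 ⟨rfl, huv⟩, (isStarNode_cons_iff hc).2 hu, ?_⟩
  rintro (_ | ⟨d', w⟩) hw hws
  · exact List.nil_prefix
  · obtain ⟨rfl, hwv⟩ := List.cons_prefix_cons.1 hw
    exact List.cons_prefix_cons.2 ⟨rfl, hlowest w hwv ((isStarNode_cons_iff hc).1 hws)⟩

lemma NoStarAncestor.cons (hc : ∀ x, R.sub (d :: x) = c.sub x) (hroot : ¬ R.IsStarNode [])
    {v : TreePath} (h : c.NoStarAncestor v) : R.NoStarAncestor (d :: v) := by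
  rintro (_ | ⟨d', w⟩) hw hws
  · exact hroot hws
  · obtain ⟨rfl, hwv⟩ := List.cons_prefix_cons.1 hw
    exact h w hwv ((isStarNode_cons_iff hc).1 hws)

lemma FollowsAtNode.cons (hc : ∀ x, R.sub (d :: x) = c.sub x) {p q : TreePath}
    (h : c.FollowsAtNode p q) : R.FollowsAtNode (d :: p) (d :: q) := by
  rcases h with ⟨v, hv, hp, hq⟩ | ⟨u, hu, hp, hq⟩
  · exact .inl ⟨d :: v, hv.cons hc, mem_lastSet_cons hc hp, mem_firstSet_cons hc hq⟩
  · refine .inr ⟨d :: u, ?_, mem_lastSet_cons hc hp, mem_firstSet_cons hc hq⟩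
    simpa [lcaP] using hu.cons hc

lemma followsAtNode_or_noStarAncestor_cons (hc : ∀ x, R.sub (d :: x) = c.sub x)
    (hroot : ¬ R.IsStarNode []) {p q : TreePath}
    (h : c.FollowsAtNode p q ∨ c.NoStarAncestor (lcaP p q)) :
    R.FollowsAtNode (d :: p) (d :: q) ∨ R.NoStarAncestor (lcaP (d :: p) (d :: q)) := by
  simpa [lcaP] using h.imp (·.cons hc) (·.cons hc hroot)

end Child

lemma PosSeq.cat_inv {r s : RE α} {l : List TreePath} (h : PosSeq (.cat r s) l) :
    ∃ u v, PosSeq r u ∧ PosSeq s v ∧ l = u.map (Dir.L :: ·) ++ v.map (Dir.R :: ·) := by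
  cases h
  exact ⟨_, _, ‹_›, ‹_›, rfl⟩

lemma PosSeq.alt_inv {r s : RE α} {l : List TreePath} (h : PosSeq (.alt r s) l) :
    (∃ u, PosSeq r u ∧ l = u.map (Dir.L :: ·)) ∨
      ∃ v, PosSeq s v ∧ l = v.map (Dir.R :: ·) := by
  cases h
  · exact .inl ⟨_, ‹_›, rfl⟩
  · exact .inr ⟨_, ‹_›, rfl⟩

lemma PosSeq.star_append {r : RE α} {u w : List TreePath} (hu : PosSeq (.star r) u)
    (hw : PosSeq (.star r) w) : PosSeq (.star r) (u ++ w) := by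
  generalize hs : RE.star r = e at hu
  induction hu <;> cases hs
  · exact hw
  · rw [List.append_assoc]
    exact .starCons ‹_› (by simp_all)

section Inversion

variable {r s : RE α} {p : TreePath}

lemma mem_firstSet_cat (h : p ∈ (cat r s).firstSet []) :
    (∃ p', p = .L :: p' ∧ p' ∈ r.firstSet []) ∨
      ∃ p', p = .R :: p' ∧ p' ∈ s.firstSet [] := by
  obtain ⟨w, hw⟩ := mem_firstSet_nil.1 h
  obtain ⟨_ | ⟨p', u⟩, _ | ⟨p'', v⟩, hu, hv, hl⟩ := hw.cat_inv
  · simp at hl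
  · simp only [List.map_nil, List.map_cons, List.nil_append, List.cons.injEq] at hl
    exact .inr ⟨p'', hl.1, mem_firstSet_nil.2 ⟨v, hv⟩⟩
  all_goals
    simp only [List.map_cons, List.cons_append, List.cons.injEq] at hl
    exact .inl ⟨p', hl.1, mem_firstSet_nil.2 ⟨u, hu⟩⟩

lemma mem_lastSet_cat (h : p ∈ (cat r s).lastSet []) :
    (∃ p', p = .L :: p' ∧ p' ∈ r.lastSet []) ∨
      ∃ p', p = .R :: p' ∧ p' ∈ s.lastSet [] := by
  obtain ⟨w, hw⟩ := mem_lastSet_nil.1 h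
  obtain ⟨u, v, hu, hv, hl⟩ := hw.cat_inv
  rcases List.eq_nil_or_concat' v with rfl | ⟨v, p', rfl⟩
  · obtain ⟨u, p', rfl, hp⟩ := List.exists_of_map_eq_append_singleton (by simpa using hl.symm)
    exact .inl ⟨p', hp.symm, mem_lastSet_nil.2 ⟨u, hu⟩⟩
  · simp only [List.map_append, List.map_cons, List.map_nil, ← List.append_assoc] at hl
    exact .inr ⟨p', (List.append_inj' hl rfl).2 |> List.singleton_inj.1,
      mem_lastSet_nil.2 ⟨v, hv⟩⟩

lemma mem_firstSet_alt (h : p ∈ (alt r s).firstSet []) :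
    (∃ p', p = .L :: p' ∧ p' ∈ r.firstSet []) ∨
      ∃ p', p = .R :: p' ∧ p' ∈ s.firstSet [] := by
  obtain ⟨w, hw⟩ := mem_firstSet_nil.1 h
  rcases hw.alt_inv with ⟨_ | ⟨p', u⟩, hu, hl⟩ | ⟨_ | ⟨p', v⟩, hv, hl⟩ <;>
    simp only [List.map_nil, List.map_cons, List.cons.injEq, reduceCtorEq] at hl
  · exact .inl ⟨p', hl.1, mem_firstSet_nil.2 ⟨u, hu⟩⟩
  · exact .inr ⟨p', hl.1, mem_firstSet_nil.2 ⟨v, hv⟩⟩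

lemma mem_lastSet_alt (h : p ∈ (alt r s).lastSet []) :
    (∃ p', p = .L :: p' ∧ p' ∈ r.lastSet []) ∨
      ∃ p', p = .R :: p' ∧ p' ∈ s.lastSet [] := by
  obtain ⟨w, hw⟩ := mem_lastSet_nil.1 h
  rcases hw.alt_inv with ⟨u, hu, hl⟩ | ⟨v, hv, hl⟩
  · obtain ⟨u, p', rfl, hp⟩ := List.exists_of_map_eq_append_singleton hl.symm
    exact .inl ⟨p', hp.symm, mem_lastSet_nil.2 ⟨u, hu⟩⟩
  · obtain ⟨v, p', rfl, hp⟩ := List.exists_of_map_eq_append_singleton hl.symm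
    exact .inr ⟨p', hp.symm, mem_lastSet_nil.2 ⟨v, hv⟩⟩

lemma mem_firstSet_star (h : p ∈ (star r).firstSet []) :
    ∃ p', p = .L :: p' ∧ p' ∈ r.firstSet [] := by
  obtain ⟨w, hw⟩ := mem_firstSet_nil.1 h
  generalize hs : star r = e at hw
  generalize hl : p :: w = l at hw
  induction hw generalizing w with
  | @starCons _ u w' hu _ _ ih =>
    cases hs
    rcases u with _ | ⟨p', u⟩
    · exact ih w rfl (by simpa using hl)
    · simp only [List.map_cons, List.cons_append, List.cons.injEq] at hl
      exact ⟨p', hl.1, mem_firstSet_nil.2 ⟨u, hu⟩⟩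
  | starNil => simp at hl
  | _ => cases hs

lemma mem_lastSet_star (h : p ∈ (star r).lastSet []) :
    ∃ p', p = .L :: p' ∧ p' ∈ r.lastSet [] := by
  obtain ⟨w, hw⟩ := mem_lastSet_nil.1 h
  generalize hs : star r = e at hw
  generalize hl : w ++ [p] = l at hw
  induction hw generalizing w with
  | @starCons _ u w' hu _ _ ih =>
    cases hs
    rcases List.eq_nil_or_concat' w' with rfl | ⟨w', p', rfl⟩
    · obtain ⟨u, p', rfl, hp⟩ :=
        List.exists_of_map_eq_append_singleton (by simpa using hl.symm)
      exact ⟨p', hp.symm, mem_lastSet_nil.2 ⟨u, hu⟩⟩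
    · rw [← List.append_assoc] at hl
      obtain ⟨-, hp⟩ := List.append_inj' hl rfl
      obtain rfl := List.singleton_inj.1 hp
      exact ih w' rfl rfl
  | starNil => simp at hl
  | _ => cases hs

end Inversion

lemma not_isStarNode_ch (a : α) (v : TreePath) : ¬ (ch a).IsStarNode v := by
  rintro ⟨t, ht⟩
  rcases v with _ | ⟨_ | _, v⟩ <;> simp [sub] at ht

lemma NoStarAncestor.nil {r : RE α} (hroot : ¬ r.IsStarNode []) : r.NoStarAncestor [] := by
  intro w hw
  rwa [List.prefix_nil.1 hw]

lemma noStarAncestor_lcaP_of_ne {r : RE α} (hroot : ¬ r.IsStarNode []) {d d' : Dir} (h : d ≠ d')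
    (p q : TreePath) : r.NoStarAncestor (lcaP (d :: p) (d' :: q)) := by
  simpa [lcaP, h] using NoStarAncestor.nil hroot

lemma not_isStarNode_nil_cat (r s : RE α) : ¬ (cat r s).IsStarNode [] := by
  simp [IsStarNode]

lemma not_isStarNode_nil_alt (r s : RE α) : ¬ (alt r s).IsStarNode [] := by
  simp [IsStarNode]

lemma followsAtNode_cat {r s : RE α} {p q : TreePath} (hp : p ∈ r.lastSet [])
    (hq : q ∈ s.firstSet []) : (cat r s).FollowsAtNode (.L :: p) (.R :: q) :=
  .inl ⟨[], ⟨r, s, rfl⟩, mem_lastSet_cons (sub_cat_left r s) hp,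
    mem_firstSet_cons (sub_cat_right r s) hq⟩

lemma followsAtNode_star {r : RE α} {p q : TreePath} (hp : .L :: p ∈ (star r).lastSet [])
    (hq : .L :: q ∈ (star r).firstSet []) (h : r.NoStarAncestor (lcaP p q)) :
    (star r).FollowsAtNode (.L :: p) (.L :: q) := by
  refine .inr ⟨[], ⟨List.nil_prefix, ⟨r, rfl⟩, ?_⟩, hp, hq⟩
  rintro (_ | ⟨d, w⟩) hw hws
  · exact List.prefix_rfl
  · simp only [lcaP, if_true, List.cons_prefix_cons] at hw
    obtain ⟨rfl, hwv⟩ := hw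
    exact absurd ((isStarNode_cons_iff (sub_star_left r)).1 hws) (h w hwv)

theorem followsAtNode_or_noStarAncestor (r : RE α) {p q : TreePath} (hp : p ∈ r.lastSet [])
    (hq : q ∈ r.firstSet []) : r.FollowsAtNode p q ∨ r.NoStarAncestor (lcaP p q) := by
  induction r generalizing p q with
  | eps =>
    obtain ⟨w, hw⟩ := mem_firstSet_nil.1 hq
    cases hw
  | ch a => exact .inr fun w _ => not_isStarNode_ch a w
  | cat r s ihr ihs =>
    rcases mem_lastSet_cat hp with ⟨p', rfl, hp'⟩ | ⟨p', rfl, hp'⟩ <;>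
      rcases mem_firstSet_cat hq with ⟨q', rfl, hq'⟩ | ⟨q', rfl, hq'⟩
    · exact followsAtNode_or_noStarAncestor_cons (sub_cat_left r s)
        (not_isStarNode_nil_cat r s) (ihr hp' hq')
    · exact .inl (followsAtNode_cat hp' hq')
    · exact .inr (noStarAncestor_lcaP_of_ne (not_isStarNode_nil_cat r s) (by decide) p' q')
    · exact followsAtNode_or_noStarAncestor_cons (sub_cat_right r s)
        (not_isStarNode_nil_cat r s) (ihs hp' hq')
  | alt r s ihr ihs =>
    rcases mem_lastSet_alt hp with ⟨p', rfl, hp'⟩ | ⟨p', rfl, hp'⟩ <;>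
      rcases mem_firstSet_alt hq with ⟨q', rfl, hq'⟩ | ⟨q', rfl, hq'⟩
    · exact followsAtNode_or_noStarAncestor_cons (sub_alt_left r s)
        (not_isStarNode_nil_alt r s) (ihr hp' hq')
    · exact .inr (noStarAncestor_lcaP_of_ne (not_isStarNode_nil_alt r s) (by decide) p' q')
    · exact .inr (noStarAncestor_lcaP_of_ne (not_isStarNode_nil_alt r s) (by decide) p' q')
    · exact followsAtNode_or_noStarAncestor_cons (sub_alt_right r s)
        (not_isStarNode_nil_alt r s) (ihs hp' hq')
  | star r ih =>
    obtain ⟨p', rfl, hp'⟩ := mem_lastSet_star hp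
    obtain ⟨q', rfl, hq'⟩ := mem_firstSet_star hq
    rcases ih hp' hq' with h | h
    · exact .inl (h.cons (sub_star_left r))
    · exact .inl (followsAtNode_star hp hq h)

theorem followsAtNode_of_posSeq {e : RE α} {w : List TreePath} (h : PosSeq e w) :
    ∀ {w₁ w₂ : List TreePath} {p q : TreePath},
      w = w₁ ++ p :: q :: w₂ → e.FollowsAtNode p q := by
  induction h with
  | eps | starNil => intro w₁ w₂ p q h; simp at h
  | ch a => intro w₁ w₂ p q h; rcases w₁ with _ | ⟨_, _ | _⟩ <;> simp at h
  | @cat r s u v hu hv ihu ihv =>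
    intro w₁ w₂ p q h
    rcases List.append_eq_append_cons_cons h with
      ⟨x, y, hx⟩ | ⟨x, y, hx, hy⟩ | ⟨x, y, hy⟩
    · obtain ⟨x', p', q', y', rfl, rfl, rfl⟩ := List.exists_of_map_eq_append_cons_cons hx
      exact (ihu rfl).cons (sub_cat_left r s)
    · obtain ⟨u, p', rfl, rfl⟩ := List.exists_of_map_eq_append_singleton hx
      obtain ⟨q', v, rfl, rfl, -⟩ := List.map_eq_cons_iff.1 hy
      exact followsAtNode_cat (mem_lastSet_nil.2 ⟨u, hu⟩) (mem_firstSet_nil.2 ⟨v, hv⟩)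
    · obtain ⟨x', p', q', y', rfl, rfl, rfl⟩ := List.exists_of_map_eq_append_cons_cons hy
      exact (ihv rfl).cons (sub_cat_right r s)
  | @altL r s u _ ih =>
    intro w₁ w₂ p q h
    obtain ⟨x', p', q', y', rfl, rfl, rfl⟩ := List.exists_of_map_eq_append_cons_cons h
    exact (ih rfl).cons (sub_alt_left r s)
  | @altR r s v _ ih =>
    intro w₁ w₂ p q h
    obtain ⟨x', p', q', y', rfl, rfl, rfl⟩ := List.exists_of_map_eq_append_cons_cons h
    exact (ih rfl).cons (sub_alt_right r s)
  | @starCons r u w hu hw ihu ihw =>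
    intro w₁ w₂ p q h
    rcases List.append_eq_append_cons_cons h with
      ⟨x, y, hx⟩ | ⟨x, y, hx, rfl⟩ | ⟨x, y, hy⟩
    · obtain ⟨x', p', q', y', rfl, rfl, rfl⟩ := List.exists_of_map_eq_append_cons_cons hx
      exact (ihu rfl).cons (sub_star_left r)
    · obtain ⟨u, p', rfl, rfl⟩ := List.exists_of_map_eq_append_singleton hx
      have hp : .L :: p' ∈ (star r).lastSet [] :=
        mem_lastSet_nil.2 ⟨u.map (.L :: ·), by simpa using hu.starCons .starNil⟩
      have hq : q ∈ (star r).firstSet [] := mem_firstSet_nil.2 ⟨y, hw⟩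
      obtain ⟨q', rfl, hq'⟩ := mem_firstSet_star hq
      rcases followsAtNode_or_noStarAncestor r (mem_lastSet_nil.2 ⟨u, hu⟩) hq' with h | h
      · exact h.cons (sub_star_left r)
      · exact followsAtNode_star hp hq h
    · exact ihw hy

lemma followsAtNode_of_mem_followSet {R : RE α} {p q : TreePath} (h : q ∈ R.followSet p) :
    R.FollowsAtNode p q := by
  obtain ⟨w₁, w₂, hw⟩ := h
  exact followsAtNode_of_posSeq hw rfl

lemma exists_posSeq_of_sub_singleton {R c : RE α} {d : Dir} (h : R.sub [d] = some c)
    {w : List TreePath} (hw : PosSeq c w) :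
    ∃ w₁ w₂, PosSeq R (w₁ ++ w.map (d :: ·) ++ w₂) := by
  cases R <;> cases d <;> simp only [sub, sub_nil, Option.some_inj, reduceCtorEq] at h <;> subst h
  case cat.L s =>
    obtain ⟨z, hz⟩ := exists_posSeq s
    exact ⟨[], z.map (.R :: ·), by simpa using hw.cat hz⟩
  case cat.R r _ =>
    obtain ⟨z, hz⟩ := exists_posSeq r
    exact ⟨z.map (.L :: ·), [], by simpa using hz.cat hw⟩
  case alt.L => exact ⟨[], [], by simpa using hw.altL⟩
  case alt.R => exact ⟨[], [], by simpa using hw.altR⟩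
  case star.L => exact ⟨[], [], by simpa using hw.starCons .starNil⟩

lemma exists_posSeq_of_sub {R r : RE α} {v : TreePath} (h : R.sub v = some r) {w : List TreePath}
    (hw : PosSeq r w) : ∃ w₁ w₂, PosSeq R (w₁ ++ w.map (v ++ ·) ++ w₂) := by
  induction v generalizing R with
  | nil =>
    obtain rfl : R = r := by simpa using h
    exact ⟨[], [], by simpa using hw⟩
  | cons d v ih =>
    rw [← List.singleton_append, sub_append, Option.bind_eq_some_iff] at h
    obtain ⟨c, hc, hcv⟩ := h
    obtain ⟨w₁, w₂, hc'⟩ := ih hcv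
    obtain ⟨w₁', w₂', hR⟩ := exists_posSeq_of_sub_singleton hc hc'
    exact ⟨w₁' ++ w₁.map (d :: ·), w₂.map (d :: ·) ++ w₂',
      by simpa [Function.comp_def, List.append_assoc] using hR⟩

lemma mem_followSet_of_sub {R r : RE α} {v : TreePath} (h : R.sub v = some r)
    {x y : List TreePath} {p q : TreePath} (hw : PosSeq r (x ++ p :: q :: y)) :
    v ++ q ∈ R.followSet (v ++ p) := by
  obtain ⟨w₁, w₂, hR⟩ := exists_posSeq_of_sub h hw
  exact ⟨w₁ ++ x.map (v ++ ·), y.map (v ++ ·) ++ w₂,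
    by simpa [List.append_assoc] using hR⟩

lemma mem_followSet_of_isCatNode {R : RE α} {v p q : TreePath} (hv : R.IsCatNode v)
    (hp : p ∈ R.lastSet (v ++ [.L])) (hq : q ∈ R.firstSet (v ++ [.R])) :
    q ∈ R.followSet p := by
  obtain ⟨r, s, hv⟩ := hv
  obtain ⟨t, ht, x, p', hx, rfl⟩ := hp
  obtain ⟨t', ht', q', y, hy, rfl⟩ := hq
  simp only [sub_append, hv, Option.bind_some, sub, sub_nil, Option.some_inj] at ht ht'
  subst ht ht'
  simpa using mem_followSet_of_sub hv (x := x.map (.L :: ·)) (y := y.map (.R :: ·))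
    (by simpa using hx.cat hy)

lemma mem_followSet_of_isStarNode {R : RE α} {u p q : TreePath} (hu : R.IsStarNode u)
    (hp : p ∈ R.lastSet u) (hq : q ∈ R.firstSet u) : q ∈ R.followSet p := by
  obtain ⟨r, hu⟩ := hu
  obtain ⟨t, ht, x, p', hx, rfl⟩ := hp
  obtain ⟨t', ht', q', y, hy, rfl⟩ := hq
  rw [hu, Option.some_inj] at ht ht'
  subst ht ht'
  exact mem_followSet_of_sub hu (by simpa using hx.star_append hy)

lemma IsStarNode.isLowestStarAnc_self {R : RE α} {u : TreePath} (h : R.IsStarNode u) :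
    R.IsLowestStarAnc u u :=
  ⟨List.prefix_rfl, h, fun _ hw _ => hw⟩

lemma IsLowestStarAnc.eq_of_isStarNode {R : RE α} {u v : TreePath} (h : R.IsLowestStarAnc v u)
    (hv : R.IsStarNode v) : u = v :=
  h.1.eq_of_length_le (h.2.2 v List.prefix_rfl hv).length_le

end RE

theorem deltaSet_eq_union_transition_nodes_general {α : Type} (R : RE α) (P : Set TreePath)
    (a : α) :
    R.deltaSet P a =
      (⋃ v ∈ R.NOdot P a, R.deltaOdot v a) ∪ (⋃ u ∈ R.NStar P a, R.deltaStar u a) := by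
  ext q
  simp only [RE.deltaSet, RE.delta, Set.mem_union, Set.mem_iUnion, exists_prop]
  constructor
  · rintro ⟨p, hpP, hq, hfollow⟩
    rcases RE.followsAtNode_of_mem_followSet hfollow with
      ⟨v, hv, hp, hqv⟩ | ⟨u, hu, hp, hqu⟩
    · exact .inl ⟨v, ⟨hv, Set.mem_biUnion hpP hp, q, hq, hqv⟩, hq, hqv⟩
    · exact .inr ⟨u, ⟨hu.2.1, ⟨p, hpP, q, hq, hu⟩, ⟨p, hpP, hp⟩, q, hq, hqu⟩,
        hq, u, hu.2.1.isLowestStarAnc_self, hqu⟩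
  · rintro (⟨v, ⟨hv, hpv, -⟩, hq, hqv⟩ |
      ⟨u, ⟨hu, -, ⟨p, hpP, hp⟩, -⟩, hq, u', hu', hqu⟩)
    · obtain ⟨p, hpP, hp⟩ := Set.mem_iUnion₂.1 hpv
      exact ⟨p, hpP, hq, RE.mem_followSet_of_isCatNode hv hp hqv⟩
    · rw [hu'.eq_of_isStarNode hu] at hqu
      exact ⟨p, hpP, hq, RE.mem_followSet_of_isStarNode hu hp hqu⟩

/-- For any set of positions `P` of `R` and any character `α`, `δ(P,α)` is the union
over `v ∈ N⊙(P,α)` of `δ⊙(v,α)` together with the union over `u ∈ N∗(P,α)` of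
`δ∗(u,α)`. -/
theorem deltaSet_eq_union_transition_nodes {α : Type} (R : RE α) (P : Set TreePath)
    (a : α) (hP : ∀ p ∈ P, R.IsPos p) :
    R.deltaSet P a =
      (⋃ v ∈ R.NOdot P a, R.deltaOdot v a) ∪ (⋃ u ∈ R.NStar P a, R.deltaStar u a) :=
  deltaSet_eq_union_transition_nodes_general R P a
end

section
/- Every ⊙-live node (with respect to P) that ⊙-dominates a node of N⊙(P,α) is a branching node of the transition tree T of P. -/
namespace RE

variable {α : Type} {R : RE α}

theorem prefix_of_mem_firstSet {v p : TreePath} (h : p ∈ R.firstSet v) : v <+: p := by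
  obtain ⟨-, -, p', -, -, rfl⟩ := h
  exact List.prefix_append v p'

theorem prefix_of_mem_lastSet {v p : TreePath} (h : p ∈ R.lastSet v) : v <+: p := by
  obtain ⟨-, -, -, p', -, rfl⟩ := h
  exact List.prefix_append v p'

theorem InT.of_prefix {P : Set TreePath} {v w : TreePath} (hv : R.InT P v) (hwv : w <+: v) :
    R.InT P w := by
  obtain ⟨p, hp, hvp⟩ := hv
  exact ⟨p, hp, hwv.trans hvp⟩

theorem inT_of_mem_lastExtentSet {P : Set TreePath} {v : TreePath}
    (h : v ∈ R.lastExtentSet P) : R.InT P v := by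
  obtain ⟨p, hp, hvp⟩ := Set.mem_iUnion₂.1 h
  exact ⟨p, hp, prefix_of_mem_lastSet hvp⟩

/-- A common first position of `right(v)` and `right(u)` lies below both, so the strictly
longer `v` must sit in the right subtree of `u`. -/
theorem OdotDom.right_prefix {u v : TreePath} (hdom : R.OdotDom u v)
    (hfirst : (R.firstSet (v ++ [Dir.R])).Nonempty) : u ++ [Dir.R] <+: v := by
  obtain ⟨huv, hne, hsub⟩ := hdom
  obtain ⟨q, hq⟩ := hfirst
  have hvq : v <+: q := (List.prefix_append v _).trans (prefix_of_mem_firstSet hq)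
  have huq : u ++ [Dir.R] <+: q := prefix_of_mem_firstSet (hsub hq)
  have hlen : u.length < v.length :=
    lt_of_le_of_ne huv.length_le fun h => hne (huv.eq_of_length h)
  exact List.prefix_of_prefix_length_le huq hvq (by simpa using hlen)

end RE

theorem live_dominating_is_branching_general {α : Type} (R : RE α) (P : Set TreePath) (a : α)
    (u v : TreePath)
    (hu : R.OdotLive P u) (hv : v ∈ R.NOdot P a) (hdom : R.OdotDom u v) :
    R.Branching P u := by
  obtain ⟨-, hvLeft, q, -, hq⟩ := hv
  have huv : u ++ [Dir.R] <+: v ++ [Dir.L] :=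
    (hdom.right_prefix ⟨q, hq⟩).trans (List.prefix_append v _)
  exact ⟨RE.inT_of_mem_lastExtentSet hu.2, (RE.inT_of_mem_lastExtentSet hvLeft).of_prefix huv⟩

/-- Every `⊙`-live node (w.r.t. `P`) that `⊙`-dominates a node of `N⊙(P,α)` is a
branching node of the transition tree `T` of `P`. -/
theorem live_dominating_is_branching {α : Type} (R : RE α) (P : Set TreePath) (a : α)
    (hP : ∀ p ∈ P, R.IsPos p) (u v : TreePath)
    (hu : R.OdotLive P u) (hv : v ∈ R.NOdot P a) (hdom : R.OdotDom u v) :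
    R.Branching P u :=
  live_dominating_is_branching_general R P a u v hu hv hdom
end

section
/- Let m > 0 be real, let n ≥ 0, and let s_0, …, s_n be reals with 0 < s_i ≤ m/e for all i, where e = exp(1). Let Δ = s_0 + ⋯ + s_n. Then ∑_{i=0}^{n} s_i · log(log(m/s_i)) ≤ Δ · log(log((n+1)·m/Δ)). -/
lemma loglog_concave (m : ℝ) (hm : 0 < m) :
    ConcaveOn ℝ (Set.Ioc 0 (m / Real.exp 1))
      (fun x => x * Real.log (Real.log (m / x))) := by
  have hme : 0 < m / Real.exp 1 := div_pos hm (Real.exp_pos 1)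
  have hint : interior (Set.Ioc (0:ℝ) (m / Real.exp 1)) = Set.Ioo 0 (m / Real.exp 1) := by
    simp [interior_Ioc]
  -- basic fact: for x in Ioo, 1 < log (m/x)
  have hu : ∀ x ∈ Set.Ioo (0:ℝ) (m / Real.exp 1), 1 < Real.log (m / x) := by
    intro x hx
    have hx0 : 0 < x := hx.1
    have h1 : Real.exp 1 < m / x := by
      rw [lt_div_iff₀ hx0]
      calc Real.exp 1 * x < Real.exp 1 * (m / Real.exp 1) := by
            exact (mul_lt_mul_iff_right₀ (Real.exp_pos 1)).2 hx.2
        _ = m := by field_simp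
    have : (0:ℝ) < m / x := lt_trans (Real.exp_pos 1) h1
    rw [Real.lt_log_iff_exp_lt this]
    exact h1
  -- derivative
  have hderiv : ∀ x ∈ Set.Ioo (0:ℝ) (m / Real.exp 1),
      HasDerivAt (fun x => x * Real.log (Real.log (m / x)))
        (Real.log (Real.log (m / x)) - 1 / Real.log (m / x)) x := by
    intro x hx
    have hx0 : 0 < x := hx.1
    have hux : 1 < Real.log (m / x) := hu x hx
    have hune : Real.log m - Real.log x ≠ 0 := by
      rw [← Real.log_div hm.ne' hx0.ne']; linarith
    have h1 : HasDerivAt (fun y : ℝ => Real.log m - Real.log y) (-(1/x)) x := by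
      simpa using (Real.hasDerivAt_log hx0.ne').const_sub (Real.log m)
    have h2 : HasDerivAt (fun y : ℝ => Real.log (Real.log m - Real.log y))
        (-(1/x) / (Real.log m - Real.log x)) x := h1.log hune
    have h3 : HasDerivAt (fun y : ℝ => y * Real.log (Real.log m - Real.log y))
        (1 * Real.log (Real.log m - Real.log x) + x * (-(1/x) / (Real.log m - Real.log x))) x :=
      (hasDerivAt_id x).mul h2
    have heq : (fun y : ℝ => y * Real.log (Real.log m - Real.log y))
        =ᶠ[nhds x] (fun y => y * Real.log (Real.log (m / y))) := by
      filter_upwards [eventually_gt_nhds hx0] with y hy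
      rw [Real.log_div hm.ne' hy.ne']
    have := h3.congr_of_eventuallyEq heq.symm
    refine this.congr_deriv ?_
    rw [Real.log_div hm.ne' hx0.ne']
    field_simp
    ring
  apply AntitoneOn.concaveOn_of_deriv (convex_Ioc _ _)
  · intro x hx
    rcases hx with ⟨hx0, hxle⟩
    have hx0' : (0:ℝ) < x := hx0
    have hmx : 0 < m / x := div_pos hm hx0'
    have hlx : 1 ≤ Real.log (m / x) := by
      rw [Real.le_log_iff_exp_le hmx, le_div_iff₀ hx0']
      calc Real.exp 1 * x ≤ Real.exp 1 * (m / Real.exp 1) :=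
            (mul_le_mul_iff_right₀ (Real.exp_pos 1)).2 hxle
        _ = m := by field_simp
    have : ContinuousAt (fun x => x * Real.log (Real.log (m / x))) x := by
      apply continuousAt_id.mul
      apply (Real.continuousAt_log (by linarith)).comp
      apply (Real.continuousAt_log hmx.ne').comp
      exact continuousAt_const.div continuousAt_id hx0'.ne'
    exact this.continuousWithinAt
  · rw [hint]
    intro x hx
    exact (hderiv x hx).differentiableAt.differentiableWithinAt
  · rw [hint]
    intro x hx y hy hxy
    rw [(hderiv x hx).deriv, (hderiv y hy).deriv]
    have hux : 1 < Real.log (m / x) := hu x hx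
    have huy : 1 < Real.log (m / y) := hu y hy
    have hmono : Real.log (m / y) ≤ Real.log (m / x) := by
      apply Real.log_le_log (div_pos hm hy.1)
      exact div_le_div_of_nonneg_left hm.le hx.1 hxy
    have h1 : Real.log (Real.log (m / y)) ≤ Real.log (Real.log (m / x)) :=
      Real.log_le_log (by linarith) hmono
    have h2 : 1 / Real.log (m / x) ≤ 1 / Real.log (m / y) :=
      one_div_le_one_div_of_le (by linarith) hmono
    linarith

/-- Let `m > 0` be real and let `s 0, …, s n` be reals with `0 < s i ≤ m / e` for all
`i ≤ n`, where `e = exp 1`. Let `Δ = s 0 + ⋯ + s n`. Then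
`∑_{i=0}^{n} s i · log (log (m / s i)) ≤ Δ · log (log ((n+1) · m / Δ))`. -/
theorem sum_loglog_le (m : ℝ) (hm : 0 < m) (n : ℕ) (s : ℕ → ℝ)
    (hpos : ∀ i ≤ n, 0 < s i) (hle : ∀ i ≤ n, s i ≤ m / Real.exp 1) :
    ∑ i ∈ Finset.range (n + 1), s i * Real.log (Real.log (m / s i)) ≤
      (∑ i ∈ Finset.range (n + 1), s i) *
        Real.log (Real.log ((n + 1 : ℝ) * m / ∑ i ∈ Finset.range (n + 1), s i)) := by
  set N : ℝ := (n + 1 : ℝ) with hN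
  have hN0 : (0:ℝ) < N := by positivity
  set Δ : ℝ := ∑ i ∈ Finset.range (n + 1), s i with hΔ
  have hΔ0 : 0 < Δ := Finset.sum_pos (fun i hi => hpos i (Finset.mem_range_succ_iff.1 hi))
    ⟨0, Finset.mem_range.2 (Nat.succ_pos n)⟩
  have hmem : ∀ i ∈ Finset.range (n + 1), s i ∈ Set.Ioc 0 (m / Real.exp 1) := fun i hi =>
    ⟨hpos i (Finset.mem_range_succ_iff.1 hi), hle i (Finset.mem_range_succ_iff.1 hi)⟩
  have hJ := (loglog_concave m hm).le_map_sum (t := Finset.range (n + 1))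
    (w := fun _ => 1 / N) (p := s)
    (fun i _ => by positivity)
    (by simp [Finset.sum_div]; field_simp; exact hN.symm)
    hmem
  simp only [smul_eq_mul] at hJ
  have hsum : ∑ i ∈ Finset.range (n + 1), (1 / N) * s i = Δ / N := by
    rw [← Finset.mul_sum, ← hΔ]; ring
  rw [hsum] at hJ
  have hrw : m / (Δ / N) = N * m / Δ := by
    field_simp
  have key : ∑ i ∈ Finset.range (n + 1), (1 / N) * (s i * Real.log (Real.log (m / s i)))
      ≤ Δ / N * Real.log (Real.log (N * m / Δ)) := by
    rw [← hrw]; exact hJ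
  calc ∑ i ∈ Finset.range (n + 1), s i * Real.log (Real.log (m / s i))
      = N * ∑ i ∈ Finset.range (n + 1), (1 / N) * (s i * Real.log (Real.log (m / s i))) := by
        rw [← Finset.mul_sum, ← mul_assoc]; field_simp
    _ ≤ N * (Δ / N * Real.log (Real.log (N * m / Δ))) := by
        exact mul_le_mul_of_nonneg_left key hN0.le
    _ = Δ * Real.log (Real.log (N * m / Δ)) := by field_simp
end
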